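/- (No strict local optima for R2R hill climbing) In a Gaussian linear SEM whose error variances are weakly increasing in the true ordering σ* and which satisfies Var(X_{σ*(i)} | X_{σ*(1)},...,X_{σ*(i-1)}) ≤ Var(X_{σ*(j)} | all other variables) for all i < j, every permutation σ not consistent with the true DAG admits an R2R move τ = R2R(σ, i, j) with ∑_k ω_k^τ ≤ ∑_k ω_k^σ. -/

import Mathlib

/-!
Let `σ` be inconsistent, with an edge `a → b` that `σ` places backwards, and let `v` be the
`σ*`-first node among those that `σ` places at or after `b`. The parents of `v` come before `b`
in `σ`, so `v ≠ b`, and the node `w` immediately before `v` in `σ` is at or after `b`, hence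
after `v` in `σ*`. With `A` the `σ`-predecessors of `w`, which contain the parents of `v`, the
hypothesis on conditional variances and the monotonicity of conditional variance give
`Var(X_v | A) ≤ ω_v = Var(X_v | σ*-predecessors of v) ≤ Var(X_w | rest) ≤ Var(X_w | A)`.
Swapping `w` and `v` is the move `R2R(σ, i, i + 1)`; it only changes the terms of `v` and `w`,
and by the Schur-complement update it changes the score by
`c² (1 / Var(X_w | A) - 1 / Var(X_v | A)) ≤ 0`, where `c` is the covariance of the residuals of
`X_v` and `X_w` given `X_A`.
-/

open Matrix BigOperators

/-- Conditional variance of coordinate `j` of a centered Gaussian vector with covariance `S`,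
given the coordinates in the index set `A`, i.e. the Schur complement
`S j j - S_{jA} (S_{AA})⁻¹ S_{Aj}`. -/
noncomputable def condVar {p : ℕ} (S : Matrix (Fin p) (Fin p) ℝ) (j : Fin p)
    (A : Finset (Fin p)) : ℝ :=
  S j j - ∑ s : A, ∑ t : A,
    S j s.1 * (Matrix.of fun a b : A => S a.1 b.1)⁻¹ s t * S t.1 j

/-- The set of predecessors of node `j` under the ordering `σ`. -/
def PRED {p : ℕ} (σ : Equiv.Perm (Fin p)) (j : Fin p) : Finset (Fin p) :=
  Finset.univ.filter fun i => σ.symm i < σ.symm j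

/-- `σ` is consistent with the DAG encoded by the weighted adjacency matrix `B`:
every edge `i → j` (i.e. `B i j ≠ 0`) goes forward in the ordering `σ`. -/
def Consistent {p : ℕ} (B : Matrix (Fin p) (Fin p) ℝ) (σ : Equiv.Perm (Fin p)) : Prop :=
  ∀ i j, B i j ≠ 0 → σ.symm i < σ.symm j

/-- The covariance matrix `Σ = (I - Bᵀ)⁻¹ Ω (I - B)⁻¹` of the Gaussian linear SEM
`X = Bᵀ X + ε`, `ε ~ N(0, Ω)` with `Ω = diag ω`. -/
noncomputable def modelCov {p : ℕ} (B : Matrix (Fin p) (Fin p) ℝ) (ω : Fin p → ℝ) :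
    Matrix (Fin p) (Fin p) ℝ :=
  (1 - B.transpose)⁻¹ * Matrix.diagonal ω * (1 - B)⁻¹

/-- The random-to-random move `R2R(σ, i, j)` (for `i < j`): the element at position `j`
is inserted at position `i`, and the elements at positions `i, …, j-1` are shifted one
step to the right. -/
noncomputable def R2R {p : ℕ} (σ : Equiv.Perm (Fin p)) (i j : Fin p) : Equiv.Perm (Fin p) :=
  σ * ((Finset.Icc i j).sort (· ≤ ·)).reverse.formPerm

section QuadraticForm

variable {n : Type*} [Fintype n] {S : Matrix n n ℝ}

lemma dotProduct_mulVec_comm (hS : S.IsSymm) (x y : n → ℝ) :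
    x ⬝ᵥ S *ᵥ y = y ⬝ᵥ S *ᵥ x := by
  rw [dotProduct_mulVec, ← mulVec_transpose, hS.eq, dotProduct_comm]

lemma dotProduct_mulVec_add_smul (hS : S.IsSymm) (y z : n → ℝ) (t : ℝ) :
    (y + t • z) ⬝ᵥ S *ᵥ (y + t • z)
      = y ⬝ᵥ S *ᵥ y + 2 * t * (z ⬝ᵥ S *ᵥ y) + t ^ 2 * (z ⬝ᵥ S *ᵥ z) := by
  rw [mulVec_add, mulVec_smul, dotProduct_add, add_dotProduct, add_dotProduct,
    dotProduct_smul, smul_dotProduct, smul_dotProduct, dotProduct_smul,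
    dotProduct_mulVec_comm hS y z, smul_eq_mul, smul_eq_mul, smul_eq_mul]
  ring

lemma dotProduct_mulVec_self_le_of_eqOn_compl (hS : S.PosDef) {C : Finset n}
    {y d : n → ℝ} (hy : ∀ u ∈ C, (S *ᵥ y) u = 0) (hd : ∀ u ∉ C, d u = y u) :
    y ⬝ᵥ S *ᵥ y ≤ d ⬝ᵥ S *ᵥ d := by
  have horth : (d - y) ⬝ᵥ S *ᵥ y = 0 := by
    refine Finset.sum_eq_zero fun u _ => ?_
    by_cases hu : u ∈ C
    · simp [hy u hu]
    · simp [hd u hu]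
  have hsplit := dotProduct_mulVec_add_smul (by simpa using hS.isHermitian) y (d - y) 1
  rw [one_smul, add_sub_cancel, horth] at hsplit
  have hnonneg : 0 ≤ (d - y) ⬝ᵥ S *ᵥ (d - y) := by
    simpa using hS.posSemidef.dotProduct_mulVec_nonneg (d - y)
  linarith

end QuadraticForm

section Regression

variable {p : ℕ} {S : Matrix (Fin p) (Fin p) ℝ}

noncomputable def regressionCoeff (S : Matrix (Fin p) (Fin p) ℝ) (x : Fin p)
    (C : Finset (Fin p)) : C → ℝ :=
  (S.submatrix (Subtype.val : C → Fin p) Subtype.val)⁻¹ *ᵥ fun t : C => S t x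

/-- The coefficient vector of the residual `X_x - E[X_x | X_C]` of the regression of `X_x`
on `X_C`. -/
noncomputable def regressionResidual (S : Matrix (Fin p) (Fin p) ℝ) (x : Fin p)
    (C : Finset (Fin p)) : Fin p → ℝ :=
  Pi.single x 1 - ∑ a : C, regressionCoeff S x C a • Pi.single a.1 1

variable {x : Fin p} {C : Finset (Fin p)}

lemma regressionResidual_apply_of_not_mem {u : Fin p} (hu : u ∉ C) :
    regressionResidual S x C u = (Pi.single x 1 : Fin p → ℝ) u := by
  have hne : ∀ a : C, a.1 ≠ u := fun a h => hu (h ▸ a.2)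
  simp [regressionResidual, Finset.sum_apply, Pi.single_apply, hne]

lemma mulVec_regressionResidual (u : Fin p) :
    (S *ᵥ regressionResidual S x C) u = S u x - ∑ a : C, S u a * regressionCoeff S x C a := by
  simp [regressionResidual, mulVec_sub, mulVec_sum, mulVec_smul,
    Finset.sum_apply, mul_comm]

lemma mulVec_regressionResidual_self :
    (S *ᵥ regressionResidual S x C) x = condVar S x C := by
  rw [mulVec_regressionResidual, condVar]
  congr 1
  refine Finset.sum_congr rfl fun s _ => ?_
  simp only [regressionCoeff, mulVec, dotProduct, Finset.mul_sum]
  exact Finset.sum_congr rfl fun t _ => (mul_assoc _ _ _).symm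

lemma mulVec_regressionResidual_of_mem (hS : S.PosDef) {u : Fin p} (hu : u ∈ C) :
    (S *ᵥ regressionResidual S x C) u = 0 := by
  set G := S.submatrix (Subtype.val : C → Fin p) Subtype.val
  have hG : IsUnit G.det :=
    (isUnit_iff_isUnit_det G).mp (hS.submatrix Subtype.val_injective).isUnit
  have h : G *ᵥ regressionCoeff S x C = fun t : C => S t x := by
    rw [regressionCoeff, mulVec_mulVec, mul_nonsing_inv _ hG, one_mulVec]
  rw [mulVec_regressionResidual, sub_eq_zero]
  simpa [G, mulVec, dotProduct] using (congrFun h ⟨u, hu⟩).symm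

lemma condVar_eq_dotProduct_mulVec_regressionResidual (hS : S.PosDef) :
    condVar S x C = regressionResidual S x C ⬝ᵥ S *ᵥ regressionResidual S x C := by
  have h : regressionResidual S x C ⬝ᵥ S *ᵥ regressionResidual S x C
      = Pi.single x 1 ⬝ᵥ S *ᵥ regressionResidual S x C := by
    refine Finset.sum_congr rfl fun u _ => ?_
    by_cases hu : u ∈ C
    · simp [mulVec_regressionResidual_of_mem hS hu]
    · rw [regressionResidual_apply_of_not_mem hu]
  rw [h, single_dotProduct, one_mul, mulVec_regressionResidual_self]

lemma condVar_pos (hS : S.PosDef) (hx : x ∉ C) : 0 < condVar S x C := by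
  have hr : regressionResidual S x C ≠ 0 := fun h => by
    simpa [h] using regressionResidual_apply_of_not_mem (S := S) (x := x) hx
  rw [condVar_eq_dotProduct_mulVec_regressionResidual hS]
  simpa using hS.dotProduct_mulVec_pos hr

/-- For `x ∉ C`, `hd` says that `d x = 1` and that `d` vanishes off `insert x C`. -/
lemma condVar_le_dotProduct_mulVec (hS : S.PosDef) {d : Fin p → ℝ}
    (hd : ∀ u ∉ C, d u = (Pi.single x 1 : Fin p → ℝ) u) :
    condVar S x C ≤ d ⬝ᵥ S *ᵥ d := by
  rw [condVar_eq_dotProduct_mulVec_regressionResidual hS]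
  exact dotProduct_mulVec_self_le_of_eqOn_compl hS
    (fun u hu => mulVec_regressionResidual_of_mem hS hu)
    (fun u hu => (hd u hu).trans (regressionResidual_apply_of_not_mem hu).symm)

lemma condVar_le_of_subset (hS : S.PosDef) {C₁ C₂ : Finset (Fin p)} (h : C₁ ⊆ C₂) :
    condVar S x C₂ ≤ condVar S x C₁ := by
  rw [condVar_eq_dotProduct_mulVec_regressionResidual hS (C := C₁)]
  exact condVar_le_dotProduct_mulVec hS fun u hu =>
    regressionResidual_apply_of_not_mem fun hu₁ => hu (h hu₁)

variable {A : Finset (Fin p)} {v w : Fin p}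

lemma dotProduct_mulVec_regressionResidual_add_smul (hS : S.PosDef) (t : ℝ) :
    (regressionResidual S w A + t • regressionResidual S v A) ⬝ᵥ
        S *ᵥ (regressionResidual S w A + t • regressionResidual S v A)
      = condVar S w A + 2 * t * (regressionResidual S v A ⬝ᵥ S *ᵥ regressionResidual S w A)
        + t ^ 2 * condVar S v A := by
  rw [dotProduct_mulVec_add_smul (by simpa using hS.isHermitian),
    condVar_eq_dotProduct_mulVec_regressionResidual hS,
    condVar_eq_dotProduct_mulVec_regressionResidual hS]

/-- With `le_condVar_insert`, the Schur-complement update of a conditional variance; the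
numerator is the squared covariance of the residuals of `X_v` and `X_w` given `X_A`. -/
lemma condVar_insert_le (hS : S.PosDef) (hv : v ∉ A) :
    condVar S w (insert v A) ≤ condVar S w A -
      (regressionResidual S v A ⬝ᵥ S *ᵥ regressionResidual S w A) ^ 2 / condVar S v A := by
  set c := regressionResidual S v A ⬝ᵥ S *ᵥ regressionResidual S w A
  have ha := condVar_pos hS hv
  have h := condVar_le_dotProduct_mulVec hS (x := w) (C := insert v A)
    (d := regressionResidual S w A + (-(c / condVar S v A)) • regressionResidual S v A)
    fun u hu => by
      simp only [Finset.mem_insert, not_or] at hu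
      simp [regressionResidual_apply_of_not_mem hu.2, Pi.single_apply, hu.1]
  rw [dotProduct_mulVec_regressionResidual_add_smul hS] at h
  convert h using 1
  field_simp
  ring

lemma le_condVar_insert (hS : S.PosDef) (hv : v ∉ A) (hvw : v ≠ w) :
    condVar S w A - (regressionResidual S v A ⬝ᵥ S *ᵥ regressionResidual S w A) ^ 2 /
      condVar S v A ≤ condVar S w (insert v A) := by
  set c := regressionResidual S v A ⬝ᵥ S *ᵥ regressionResidual S w A
  set r := regressionResidual S w (insert v A)
  have ha := condVar_pos hS hv
  -- `r` is `ρ_w + r v • ρ_v` plus a vector supported on `A`, with `ρ` the residuals given `A`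
  have hy : ∀ u ∈ A,
      (S *ᵥ (regressionResidual S w A + r v • regressionResidual S v A)) u = 0 := fun u hu => by
    simp [mulVec_add, mulVec_smul, mulVec_regressionResidual_of_mem hS hu]
  have hr : ∀ u ∉ A, r u = (regressionResidual S w A + r v • regressionResidual S v A) u :=
    fun u hu => by
      by_cases huv : u = v
      · subst huv
        simp [regressionResidual_apply_of_not_mem hu, hvw]
      · have hu' : u ∉ insert v A := by simp [huv, hu]
        simp [r, regressionResidual_apply_of_not_mem hu', regressionResidual_apply_of_not_mem hu,
          Pi.single_apply, huv]
  have h := dotProduct_mulVec_self_le_of_eqOn_compl hS hy hr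
  rw [dotProduct_mulVec_regressionResidual_add_smul hS,
    ← condVar_eq_dotProduct_mulVec_regressionResidual hS] at h
  have hsq : 0 ≤ condVar S v A * (r v + c / condVar S v A) ^ 2 := by positivity
  have hexp : condVar S v A * (r v + c / condVar S v A) ^ 2
      = 2 * r v * c + r v ^ 2 * condVar S v A + c ^ 2 / condVar S v A := by
    field_simp
    ring
  linarith

lemma condVar_add_condVar_insert_le (hS : S.PosDef) (hv : v ∉ A) (hw : w ∉ A) (hvw : v ≠ w)
    (h : condVar S v A ≤ condVar S w A) :
    condVar S v A + condVar S w (insert v A) ≤ condVar S w A + condVar S v (insert w A) := by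
  have hupper := condVar_insert_le (w := w) hS hv
  have hlower := le_condVar_insert hS hw hvw.symm
  rw [dotProduct_mulVec_comm (by simpa using hS.isHermitian) (regressionResidual S w A)] at hlower
  have := div_le_div_of_nonneg_left (sq_nonneg
    (regressionResidual S v A ⬝ᵥ S *ᵥ regressionResidual S w A)) (condVar_pos hS hv) h
  linarith

end Regression

theorem Matrix.BlockTriangular.nonsing_inv_apply_self_mul {m R α : Type*} [Fintype m]
    [DecidableEq m] [CommRing R] [LinearOrder α] {M : Matrix m m R} {b : m → α}
    (hM : M.BlockTriangular b) (hb : Function.Injective b) (hdet : IsUnit M.det) (i : m) :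
    M⁻¹ i i * M i i = 1 := by
  have : Invertible M := M.invertibleOfIsUnitDet hdet
  have hinv := blockTriangular_inv_of_blockTriangular hM
  have h := congrFun (congrFun (M.nonsing_inv_mul hdet) i) i
  rw [mul_apply, one_apply_eq, Finset.sum_eq_single i] at h
  · exact h
  · intro u _ hui
    rcases lt_or_gt_of_ne (hb.ne hui) with hlt | hlt
    · rw [hinv hlt, zero_mul]
    · rw [hM hlt, mul_zero]
  · simp

lemma mem_PRED_iff {p : ℕ} {σ : Equiv.Perm (Fin p)} {u k : Fin p} :
    u ∈ PRED σ k ↔ σ.symm u < σ.symm k := by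
  simp [PRED]

section SEM

variable {p : ℕ} {B : Matrix (Fin p) (Fin p) ℝ} {π : Equiv.Perm (Fin p)}

lemma Consistent.apply_self (h : Consistent B π) (i : Fin p) : B i i = 0 :=
  by_contra fun hB => lt_irrefl _ (h i i hB)

lemma Consistent.blockTriangular_one_sub (h : Consistent B π) :
    (1 - B).BlockTriangular π.symm :=
  blockTriangular_one.sub fun i j hji => by_contra fun hB => (h i j hB).asymm hji

lemma Consistent.det_one_sub (h : Consistent B π) : (1 - B).det = 1 := by
  rw [← det_submatrix_equiv_self π, det_of_isUpperTriangular]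
  · simp [h.apply_self]
  · simpa using h.blockTriangular_one_sub.submatrix (f := π)

lemma Consistent.isUnit_det_one_sub (h : Consistent B π) : IsUnit (1 - B).det := by
  simp [h.det_one_sub]

lemma Consistent.blockTriangular_inv_one_sub (h : Consistent B π) :
    (1 - B)⁻¹.BlockTriangular π.symm :=
  have := (1 - B).invertibleOfIsUnitDet h.isUnit_det_one_sub
  blockTriangular_inv_of_blockTriangular h.blockTriangular_one_sub

lemma Consistent.nonsing_inv_one_sub_apply_self (h : Consistent B π) (i : Fin p) :
    (1 - B)⁻¹ i i = 1 := by
  simpa [h.apply_self] using h.blockTriangular_one_sub.nonsing_inv_apply_self_mul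
    π.symm.injective h.isUnit_det_one_sub i

variable {ω : Fin p → ℝ}

lemma Consistent.posDef_modelCov (h : Consistent B π) (hω : ∀ i, 0 < ω i) :
    (modelCov B ω).PosDef := by
  have hN : IsUnit (1 - B)⁻¹ :=
    isUnit_nonsing_inv_iff.mpr ((isUnit_iff_isUnit_det _).mpr h.isUnit_det_one_sub)
  have := (Matrix.PosDef.diagonal hω).conjTranspose_mul_mul_same
    (mulVec_injective_of_isUnit hN)
  rwa [conjTranspose_eq_transpose_of_trivial, transpose_nonsing_inv,
    transpose_sub, transpose_one] at this

lemma dotProduct_modelCov_mulVec (d : Fin p → ℝ) :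
    d ⬝ᵥ modelCov B ω *ᵥ d = ∑ u, ω u * ((1 - B)⁻¹ *ᵥ d) u ^ 2 := by
  have hT : 1 - Bᵀ = (1 - B)ᵀ := by rw [transpose_sub, transpose_one]
  rw [modelCov, hT, ← transpose_nonsing_inv, ← mulVec_mulVec,
    ← mulVec_mulVec, dotProduct_mulVec, vecMul_transpose, dotProduct_comm]
  simp [dotProduct, mulVec_diagonal, sq, mul_assoc]

lemma Consistent.condVar_modelCov_le (h : Consistent B π) (hω : ∀ i, 0 < ω i) {x : Fin p}
    {C : Finset (Fin p)} (hpa : ∀ u, B u x ≠ 0 → u ∈ C) :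
    condVar (modelCov B ω) x C ≤ ω x := by
  have hd : ∀ u ∉ C, ((1 - B) *ᵥ Pi.single x 1) u = (Pi.single x 1 : Fin p → ℝ) u := by
    intro u hu
    have hB : B u x = 0 := by_contra fun hB => hu (hpa u hB)
    simp [one_apply, Pi.single_apply, hB]
  refine (condVar_le_dotProduct_mulVec (h.posDef_modelCov hω) hd).trans_eq ?_
  rw [dotProduct_modelCov_mulVec, mulVec_mulVec,
    nonsing_inv_mul _ h.isUnit_det_one_sub, one_mulVec]
  simp [Pi.single_apply]

lemma Consistent.le_condVar_modelCov (h : Consistent B π) (hω : ∀ i, 0 < ω i) {x : Fin p}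
    {C : Finset (Fin p)} (hC : C ⊆ PRED π x) :
    ω x ≤ condVar (modelCov B ω) x C := by
  set r := regressionResidual (modelCov B ω) x C
  have hxC : x ∉ C := fun hx => lt_irrefl (π.symm x) (mem_PRED_iff.mp (hC hx))
  have hx : ((1 - B)⁻¹ *ᵥ r) x = 1 := by
    rw [mulVec, dotProduct, Finset.sum_eq_single x]
    · have hrx : r x = 1 := (regressionResidual_apply_of_not_mem hxC).trans (by simp)
      rw [h.nonsing_inv_one_sub_apply_self, hrx, one_mul]
    · intro u _ hux
      by_cases hu : u ∈ C
      · have hlt : π.symm u < π.symm x := mem_PRED_iff.mp (hC hu)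
        rw [h.blockTriangular_inv_one_sub hlt, zero_mul]
      · have hru : r u = 0 := (regressionResidual_apply_of_not_mem hu).trans (by simp [hux])
        rw [hru, mul_zero]
    · simp
  rw [condVar_eq_dotProduct_mulVec_regressionResidual (h.posDef_modelCov hω),
    dotProduct_modelCov_mulVec]
  calc ω x = ω x * ((1 - B)⁻¹ *ᵥ r) x ^ 2 := by rw [hx]; ring
    _ ≤ ∑ u, ω u * ((1 - B)⁻¹ *ᵥ r) u ^ 2 :=
      Finset.single_le_sum (f := fun u => ω u * ((1 - B)⁻¹ *ᵥ r) u ^ 2)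
        (fun u _ => mul_nonneg (hω u).le (sq_nonneg _)) (Finset.mem_univ x)

end SEM

section Ordering

variable {p : ℕ} (σ : Equiv.Perm (Fin p)) {m j : Fin p}

lemma R2R_of_val_eq_succ (hj : (j : ℕ) = m + 1) : R2R σ m j = σ * Equiv.swap j m := by
  have hIcc : Finset.Icc m j = {m, j} := by
    ext u
    simp only [Finset.mem_Icc, Finset.mem_insert, Finset.mem_singleton, Fin.le_def, Fin.ext_iff]
    omega
  have hsort : (Finset.Icc m j).sort (· ≤ ·) = [m, j] := by
    have hmj : m ≤ j := Fin.le_def.mpr (by omega)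
    have hne : m ∉ ({j} : Finset (Fin p)) := by simp [Fin.ext_iff]; omega
    rw [hIcc, Finset.sort_insert (r := (· ≤ ·)) (by simpa using hmj) hne, Finset.sort_singleton]
  simp [R2R, hsort]

lemma PRED_mul_swap_of_ne (hj : (j : ℕ) = m + 1) {k : Fin p} (hkj : k ≠ σ j)
    (hkm : k ≠ σ m) :
    PRED (σ * Equiv.swap j m) k = PRED σ k := by
  ext u
  obtain ⟨t, rfl⟩ := σ.surjective u
  obtain ⟨i, rfl⟩ := σ.surjective k
  simp only [ne_eq, EmbeddingLike.apply_eq_iff_eq] at hkj hkm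
  simp only [mem_PRED_iff, Equiv.Perm.mul_def, Equiv.symm_trans_apply, Equiv.symm_apply_apply,
    Equiv.symm_swap, Equiv.swap_apply_def]
  split_ifs <;> simp only [Fin.lt_def, Fin.ext_iff] at * <;> omega

lemma PRED_mul_swap_apply_left (hj : (j : ℕ) = m + 1) :
    PRED (σ * Equiv.swap j m) (σ j) = PRED σ (σ m) := by
  ext u
  obtain ⟨t, rfl⟩ := σ.surjective u
  simp only [mem_PRED_iff, Equiv.Perm.mul_def, Equiv.symm_trans_apply, Equiv.symm_apply_apply,
    Equiv.symm_swap, Equiv.swap_apply_def]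
  split_ifs <;> simp only [Fin.lt_def, Fin.ext_iff] at * <;> omega

lemma PRED_mul_swap_apply_right (hj : (j : ℕ) = m + 1) :
    PRED (σ * Equiv.swap j m) (σ m) = insert (σ j) (PRED σ (σ m)) := by
  ext u
  obtain ⟨t, rfl⟩ := σ.surjective u
  simp only [mem_PRED_iff, Finset.mem_insert, Equiv.Perm.mul_def, Equiv.symm_trans_apply,
    Equiv.symm_apply_apply, Equiv.symm_swap, Equiv.swap_apply_def, EmbeddingLike.apply_eq_iff_eq]
  split_ifs <;> simp only [Fin.lt_def, Fin.ext_iff] at * <;> omega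

lemma PRED_apply_of_val_eq_succ (hj : (j : ℕ) = m + 1) :
    PRED σ (σ j) = insert (σ m) (PRED σ (σ m)) := by
  ext u
  obtain ⟨t, rfl⟩ := σ.surjective u
  simp only [mem_PRED_iff, Finset.mem_insert, Equiv.symm_apply_apply,
    EmbeddingLike.apply_eq_iff_eq, Fin.lt_def, Fin.ext_iff]
  omega

lemma sum_PRED_mul_swap (hj : (j : ℕ) = m + 1) (f : Fin p → Finset (Fin p) → ℝ) :
    ∑ k, f k (PRED (σ * Equiv.swap j m) k)
        + (f (σ m) (PRED σ (σ m)) + f (σ j) (insert (σ m) (PRED σ (σ m))))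
      = ∑ k, f k (PRED σ k)
        + (f (σ j) (PRED σ (σ m)) + f (σ m) (insert (σ j) (PRED σ (σ m)))) := by
  have hne : σ j ≠ σ m := σ.injective.ne fun h => by simp [h] at hj
  have hsplit (g : Fin p → ℝ) :
      ∑ k, g k = g (σ j) + g (σ m) + ∑ k ∈ Finset.univ \ {σ j, σ m}, g k := by
    rw [← Finset.sum_sdiff (Finset.subset_univ {σ j, σ m}), Finset.sum_pair hne]
    ring
  have hrest : ∑ k ∈ Finset.univ \ {σ j, σ m}, f k (PRED (σ * Equiv.swap j m) k)
      = ∑ k ∈ Finset.univ \ {σ j, σ m}, f k (PRED σ k) :=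
    Finset.sum_congr rfl fun k hk => by
      simp only [Finset.mem_sdiff, Finset.mem_insert, Finset.mem_singleton, not_or] at hk
      rw [PRED_mul_swap_of_ne σ hj hk.2.1 hk.2.2]
  rw [hsplit, hsplit (fun k => f k (PRED σ k)), hrest, PRED_mul_swap_apply_left σ hj,
    PRED_mul_swap_apply_right σ hj, PRED_apply_of_val_eq_succ σ hj]
  ring

end Ordering

lemma Consistent.exists_adjacent_inversion {p : ℕ} {B : Matrix (Fin p) (Fin p) ℝ}
    {π σ : Equiv.Perm (Fin p)} (hπ : Consistent B π) (hσ : ¬ Consistent B σ) :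
    ∃ m j : Fin p, (j : ℕ) = m + 1 ∧ π.symm (σ j) < π.symm (σ m) ∧
      ∀ u, B u (σ j) ≠ 0 → u ∈ PRED σ (σ m) := by
  obtain ⟨a, b, hab, hba⟩ : ∃ a b, B a b ≠ 0 ∧ σ.symm b ≤ σ.symm a := by
    simpa [Consistent] using hσ
  set R := Finset.univ.filter fun u => σ.symm b ≤ σ.symm u
  obtain ⟨v, hvR, hvmin⟩ := R.exists_min_image π.symm ⟨b, by simp [R]⟩
  have hpa : ∀ u, B u v ≠ 0 → σ.symm u < σ.symm b := fun u hu => by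
    by_contra h
    exact (hvmin u (by simpa [R] using h)).not_gt (hπ u v hu)
  have hbv : σ.symm b < σ.symm v := by
    refine lt_of_le_of_ne (by simpa [R] using hvR) fun h => ?_
    rw [σ.symm.injective h] at hab
    exact (hpa a hab).not_ge hba
  set m : Fin p := ⟨σ.symm v - 1, by omega⟩
  have hm : (m : ℕ) + 1 = σ.symm v := by simp only [m]; omega
  refine ⟨m, σ.symm v, hm.symm, ?_, fun u hu => ?_⟩
  · rw [Equiv.apply_symm_apply]
    refine lt_of_le_of_ne (hvmin _ ?_) fun h => ?_
    · simp only [R, Finset.mem_filter, Finset.mem_univ, true_and, Equiv.symm_apply_apply,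
        Fin.le_def]
      omega
    · have := congrArg (fun u => (σ.symm u : ℕ)) (π.symm.injective h)
      simp only [Equiv.symm_apply_apply] at this
      omega
  · have := hpa u (by simpa using hu)
    simp only [mem_PRED_iff, Equiv.symm_apply_apply, Fin.lt_def] at this ⊢
    omega

theorem stmt15_general {p : ℕ} (B : Matrix (Fin p) (Fin p) ℝ) (ω : Fin p → ℝ)
    (hω : ∀ j, 0 < ω j)
    (σs : Equiv.Perm (Fin p)) (hσs : Consistent B σs)
    (hcond : ∀ i j : Fin p, i < j →
      condVar (modelCov B ω) (σs i) (PRED σs (σs i)) ≤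
        condVar (modelCov B ω) (σs j) (Finset.univ.erase (σs j)))
    (σ : Equiv.Perm (Fin p)) (hσ : ¬ Consistent B σ) :
    ∃ i j : Fin p, i < j ∧
      ∑ k, condVar (modelCov B ω) k (PRED (R2R σ i j) k) ≤
        ∑ k, condVar (modelCov B ω) k (PRED σ k) := by
  obtain ⟨m, j, hj, hinv, hpa⟩ := hσs.exists_adjacent_inversion hσ
  have hS := hσs.posDef_modelCov hω
  set A : Finset (Fin p) := PRED σ (σ m)
  have hvA : σ j ∉ A := by
    simp only [A, mem_PRED_iff, Equiv.symm_apply_apply, not_lt, Fin.le_def]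
    omega
  have hwA : σ m ∉ A := by simp [A, mem_PRED_iff]
  have hvar : condVar (modelCov B ω) (σ j) A ≤ condVar (modelCov B ω) (σ m) A :=
    calc condVar (modelCov B ω) (σ j) A ≤ ω (σ j) := hσs.condVar_modelCov_le hω hpa
      _ ≤ condVar (modelCov B ω) (σ j) (PRED σs (σ j)) := hσs.le_condVar_modelCov hω le_rfl
      _ ≤ condVar (modelCov B ω) (σ m) (Finset.univ.erase (σ m)) := by
        simpa using hcond _ _ hinv
      _ ≤ condVar (modelCov B ω) (σ m) A :=
        condVar_le_of_subset hS (Finset.subset_erase.mpr ⟨Finset.subset_univ A, hwA⟩)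
  refine ⟨m, j, Fin.lt_def.mpr (by omega), ?_⟩
  rw [R2R_of_val_eq_succ σ hj]
  have := sum_PRED_mul_swap σ hj (condVar (modelCov B ω))
  have := condVar_add_condVar_insert_le hS hvA hwA (σ.injective.ne fun h => by simp [h] at hj)
    hvar
  linarith

/-- No strict local optima for R2R hill climbing: in a Gaussian linear SEM whose error
variances are weakly increasing in the true ordering `σ*` and satisfying condition (5)
of the paper, every permutation `σ` not consistent with the true DAG admits an R2R move
`τ = R2R(σ, i, j)` with `∑_k ω_k^τ ≤ ∑_k ω_k^σ`. -/
theorem stmt15 {p : ℕ} (B : Matrix (Fin p) (Fin p) ℝ) (ω : Fin p → ℝ)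
    (hω : ∀ j, 0 < ω j)
    (σs : Equiv.Perm (Fin p)) (hσs : Consistent B σs)
    (hinc : Monotone fun k =>
      condVar (modelCov B ω) (σs k) (PRED σs (σs k)))
    (hcond : ∀ i j : Fin p, i < j →
      condVar (modelCov B ω) (σs i) (PRED σs (σs i)) ≤
        condVar (modelCov B ω) (σs j) (Finset.univ.erase (σs j)))
    (σ : Equiv.Perm (Fin p)) (hσ : ¬ Consistent B σ) :
    ∃ i j : Fin p, i < j ∧
      ∑ k, condVar (modelCov B ω) k (PRED (R2R σ i j) k) ≤
        ∑ k, condVar (modelCov B ω) k (PRED σ k) :=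
  stmt15_general B ω hω σs hσs hcond σ hσ
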